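/- Let G and H be modules over a principal ideal domain R, let I be a partial isomorphism system witnessing G ≅_p H, and suppose G has a partial decomposition basis C. Then C' = { f(X) : X ∈ C, f ∈ I, X ⊆ dom(f) } is a partial decomposition basis for H. In particular, if G ≅_p H and G has a partial decomposition basis, then so does H. -/

import Mathlib

noncomputable section

namespace UlmW

universe u

variable {R : Type*} [CommRing R]

/-- The submodule `p^α M`, defined by transfinite recursion on `α`. -/
def ppow {M : Type u} [AddCommGroup M] [Module R M] (p : R) (α : Ordinal.{u}) :
    Submodule R M :=
  Ordinal.limitRecOn α ⊤ (fun _ S => Submodule.map (LinearMap.lsmul R M p) S)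
    fun β _ ih => ⨅ (γ : Set.Iio β), ih γ.1 γ.2

open scoped Classical in
/-- The `p`-height of `x`, with `⊤` playing the role of `∞`. -/
def pheight {M : Type u} [AddCommGroup M] [Module R M] (p : R) (x : M) :
    WithTop Ordinal.{u} :=
  if h : ∃ α : Ordinal.{u}, x ∈ ppow p α ∧ x ∉ ppow p (α + 1) then (h.choose : WithTop Ordinal)
  else ⊤

/-- `H⁰ = {x : ∃ a ≠ 0, a • x ∈ H}`. -/
def hull {M : Type u} [AddCommGroup M] [Module R M] (H : Submodule R M) : Set M :=
  {x | ∃ a : R, a ≠ 0 ∧ a • x ∈ H}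

/-- `X` is a decomposition set with respect to the single prime `p`. -/
def IsDecompWrt {M : Type u} [AddCommGroup M] [Module R M] (p : R) (X : Set M) : Prop :=
  (LinearIndependent R (fun x : X => (x : M))) ∧
  (∀ x ∈ X, ∀ a : R, a ≠ 0 → a • x ≠ 0) ∧
  (∀ s : Finset M, ↑s ⊆ X → ∀ c : M → R,
    pheight p (∑ x ∈ s, c x • x) = s.inf fun x => pheight p (c x • x))

/-- `X` is a decomposition set (with respect to every prime of `R`). -/
def IsDecompositionSet (R : Type*) [CommRing R] {M : Type u} [AddCommGroup M] [Module R M]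
    (X : Set M) : Prop :=
  ∀ p : R, Prime p → IsDecompWrt p X

/-- partial decomposition basis, heights taken w.r.t. a fixed prime `p`. -/
def IsPDBWrt {M : Type u} [AddCommGroup M] [Module R M] (p : R) (C : Set (Set M)) : Prop :=
  C.Nonempty ∧ (∀ X ∈ C, X.Finite) ∧ (∀ X ∈ C, IsDecompWrt p X) ∧
  ∀ X ∈ C, ∀ x : M, ∃ Y ∈ C, X ⊆ Y ∧ x ∈ hull (Submodule.span R Y)

/-- partial decomposition basis (heights w.r.t. all primes of `R`). -/
def IsPDB (R : Type*) [CommRing R] {M : Type u} [AddCommGroup M] [Module R M] (C : Set (Set M)) : Prop :=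
  C.Nonempty ∧ (∀ X ∈ C, X.Finite) ∧ (∀ X ∈ C, IsDecompositionSet R X) ∧
  ∀ X ∈ C, ∀ x : M, ∃ Y ∈ C, X ⊆ Y ∧ x ∈ hull (Submodule.span R Y)

/-- A partial isomorphism system `I : G ≅_p H`. -/
def IsPartialIsoSystem {M N : Type*} [AddCommGroup M] [Module R M]
    [AddCommGroup N] [Module R N] (I : Set (M →ₗ.[R] N)) : Prop :=
  I.Nonempty ∧
  (∀ f ∈ I, Function.Injective f.toFun) ∧
  (∀ f ∈ I, ∀ a : M, ∃ g ∈ I, f ≤ g ∧ a ∈ g.domain) ∧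
  (∀ f ∈ I, ∀ b : N, ∃ g ∈ I, f ≤ g ∧ ∃ y : g.domain, g y = b)

/-- The Ulm sequence of `x`: `U(x) = (|pⁱ x|)ᵢ`. -/
def UlmSeqOf {M : Type u} [AddCommGroup M] [Module R M] (p : R) (x : M) :
    ℕ → WithTop Ordinal.{u} :=
  fun i => pheight p ((p ^ i) • x)

/-- `u` is an Ulm sequence. -/
def IsUlmSeq (u : ℕ → WithTop Ordinal.{u}) : Prop :=
  ∀ i, (u i = ⊤ → u (i + 1) = ⊤) ∧ (u i ≠ ⊤ → u i < u (i + 1))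

/-- Equivalence of Ulm sequences. -/
def UlmEquiv (u v : ℕ → WithTop Ordinal.{u}) : Prop :=
  ∃ m n : ℕ, ∀ i, u (i + n) = v (i + m)

/-- `X` contains at least `n` elements whose Ulm sequence is equivalent to `u`. -/
def HasAtLeast {M : Type u} [AddCommGroup M] [Module R M] (p : R)
    (u : ℕ → WithTop Ordinal.{u}) (n : ℕ) (X : Set M) : Prop :=
  ∃ s : Finset M, ↑s ⊆ X ∧ n ≤ s.card ∧ ∀ x ∈ s, UlmEquiv (UlmSeqOf p x) u

/-- `ŵ_C(e,G)` where `e` is the class of the Ulm sequence `u`. -/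
def wHat {M : Type u} [AddCommGroup M] [Module R M] (p : R) (C : Set (Set M))
    (u : ℕ → WithTop Ordinal.{u}) : ℕ∞ :=
  sSup {N : ℕ∞ | ∃ n : ℕ, N = (n : ℕ∞) ∧ ∃ X ∈ C, HasAtLeast p u n X}

/-- `x` is proper with respect to `S`. -/
def IsProper {M : Type u} [AddCommGroup M] [Module R M] (p : R) (S : Submodule R M)
    (x : M) : Prop :=
  ∀ s ∈ S, pheight p (x + s) ≤ pheight p x

/-- `H` is a nice submodule. -/
def IsNice {M : Type u} [AddCommGroup M] [Module R M] (p : R) (H : Submodule R M) : Prop :=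
  ∀ x : M, ∃ h ∈ H, ∀ h' ∈ H, pheight p (x + h') ≤ pheight p (x + h)

/-- The Ulm invariant `u_p(σ, M)`: the dimension of `(p^σ M)[p]/(p^{σ+1} M)[p]`
over the residue field `R/(p)`. -/
def uCard (p : R) (M : Type u) [AddCommGroup M] [Module R M] (σ : Ordinal.{u}) :
    Cardinal :=
  let V : Submodule R M := ppow p σ ⊓ Submodule.torsionBy R M p
  let W : Submodule R V := (ppow p (σ + 1) ⊓ Submodule.torsionBy R M p).comap V.subtype
  Module.rank (R ⧸ Ideal.span {p})
    ((V ⧸ W) ⧸ (Ideal.span {p} • (⊤ : Submodule R (V ⧸ W))))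

/-- `û_p(σ, M) = min (u_p(σ, M), ω)`. -/
def uHat (p : R) (M : Type u) [AddCommGroup M] [Module R M] (σ : Ordinal.{u}) : Cardinal :=
  min (uCard p M σ) Cardinal.aleph0

/-- `û_p(∞, M) = min (dim (p^∞ M)[p], ω)`. -/
def uHatInf (p : R) (M : Type u) [AddCommGroup M] [Module R M] : Cardinal :=
  let V : Submodule R M := (⨅ α : Ordinal.{u}, ppow p α) ⊓ Submodule.torsionBy R M p
  min (Module.rank (R ⧸ Ideal.span {p})
    (V ⧸ (Ideal.span {p} • (⊤ : Submodule R V)))) Cardinal.aleph0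

end UlmW

open UlmW

/-- The ideal `(p) ⊆ ℤ` is prime. -/
instance zpSpanPrime (p : ℤ) [hp : Fact (Prime p)] : (Ideal.span {p} : Ideal ℤ).IsPrime :=
  (Ideal.span_singleton_prime hp.out.ne_zero).mpr hp.out

/-- `ℤ_(p)`, the integers localized at the prime `p`. -/
abbrev Zp (p : ℤ) [Fact (Prime p)] : Type :=
  Localization.AtPrime (Ideal.span {p} : Ideal ℤ)


universe u

open UlmW

/-! Every `f ∈ I` preserves `p`-heights: by transfinite induction, `x ∈ p^α G` iff
`f x ∈ p^α H`, the successor step using the back-and-forth property to find `p`-divisors on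
the other side. So `f` carries decomposition sets inside its domain to decomposition sets, and
extending `f` first to reach a given `b ∈ H` and then over a finite decomposition set turns the
extension property of `C` into that of `C'`. -/

section LinearMaps

variable {R : Type*} [CommRing R] {D M N : Type*} [AddCommGroup D] [Module R D]
  [AddCommGroup M] [Module R M] [AddCommGroup N] [Module R N] {f g : M →ₗ.[R] N}

theorem map_mem_span_image_of_mem_span_image {φ : D →ₗ[R] M} (ψ : D →ₗ[R] N)
    (hφ : Function.Injective φ) {S : Set D} {d : D} (h : φ d ∈ Submodule.span R (φ '' S)) :
    ψ d ∈ Submodule.span R (ψ '' S) := by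
  rw [Submodule.span_image] at h ⊢
  obtain ⟨e, he, hed⟩ := h
  exact hφ hed ▸ Submodule.mem_map_of_mem he

theorem LinearPMap.subtype_image_preimage {X : Set M} (hX : X ⊆ f.domain) :
    f.domain.subtype '' (Subtype.val ⁻¹' X) = X :=
  Set.image_preimage_eq_of_subset (by simpa using hX)

theorem LinearPMap.image_preimage_subset_of_le (hfg : f ≤ g) {X Y : Set M} (hXY : X ⊆ Y) :
    f.toFun '' (Subtype.val ⁻¹' X) ⊆ g.toFun '' (Subtype.val ⁻¹' Y) := by
  rintro _ ⟨x, hx, rfl⟩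
  exact ⟨⟨x, hfg.1 x.2⟩, hXY hx, (hfg.2 rfl).symm⟩

end LinearMaps

namespace UlmW

variable {R : Type*} [CommRing R]

section Height

variable {M N : Type u} [AddCommGroup M] [Module R M] [AddCommGroup N] [Module R N] (p : R)

theorem ppow_zero : (ppow p 0 : Submodule R M) = ⊤ := by
  simp [ppow]

theorem mem_ppow_add_one_iff {x : M} {α : Ordinal.{u}} :
    x ∈ ppow p (α + 1) ↔ ∃ y ∈ ppow p α, p • y = x := by
  simp [ppow]

theorem ppow_of_isSuccLimit {α : Ordinal.{u}} (hα : Order.IsSuccLimit α) :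
    (ppow p α : Submodule R M) = ⨅ β : Set.Iio α, ppow p β.1 := by
  rw [ppow, Ordinal.limitRecOn_limit _ _ _ _ hα]
  rfl

theorem pheight_eq_of_mem_ppow_iff {x : M} {y : N}
    (h : ∀ α, x ∈ ppow p α ↔ y ∈ ppow p α) : pheight p x = pheight p y := by
  have hP : (fun α => x ∈ ppow p α ∧ x ∉ ppow p (α + 1))
      = fun α => y ∈ ppow p α ∧ y ∉ ppow p (α + 1) := by
    simp only [h]
  unfold pheight
  rw [hP]

end Height

section Transfer

variable {D : Type*} [AddCommGroup D] [Module R D]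
  {M N : Type u} [AddCommGroup M] [Module R M] [AddCommGroup N] [Module R N]

theorem IsDecompWrt.image_of_pheight_eq {p : R} {φ : D →ₗ[R] M} {ψ : D →ₗ[R] N}
    (hφ : Function.Injective φ) (hψ : Function.Injective ψ)
    (hpψ : ∀ d, pheight p (ψ d) = pheight p (φ d)) {S : Set D}
    (hS : IsDecompWrt p (φ '' S)) : IsDecompWrt p (ψ '' S) := by
  classical
  obtain ⟨hli, htf, hsum⟩ := hS
  refine ⟨?_, ?_, ?_⟩
  · have hS : LinearIndepOn R id S := ((linearIndepOn_iff_image hφ.injOn).2 hli).of_comp φ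
    exact (hS.map_injOn ψ hψ.injOn).id_image
  · rintro _ ⟨d, hd, rfl⟩ a ha h
    rw [← map_smul, ← map_zero ψ] at h
    apply htf _ ⟨d, hd, rfl⟩ a ha
    rw [← map_smul, hψ h, map_zero]
  · intro s hs c
    obtain ⟨t, htS, rfl⟩ := Finset.subset_set_image_iff.1 hs
    set c' := Function.extend φ (c ∘ ψ) 0
    have hc' : ∀ d, c' (φ d) = c (ψ d) := fun d => hφ.extend_apply _ _ d
    calc pheight p (∑ y ∈ t.image ψ, c y • y)
        = pheight p (ψ (∑ d ∈ t, c (ψ d) • d)) := by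
          simp [Finset.sum_image hψ.injOn, map_sum]
      _ = pheight p (∑ z ∈ t.image φ, c' z • z) := by
          rw [hpψ, map_sum]
          simp [Finset.sum_image hφ.injOn, hc']
      _ = (t.image φ).inf fun z => pheight p (c' z • z) :=
          hsum _ (by simpa using Set.image_mono htS) c'
      _ = (t.image ψ).inf fun y => pheight p (c y • y) := by
          simp only [Finset.inf_image]
          refine Finset.inf_congr rfl fun d _ => ?_
          simp only [Function.comp_apply, hc', ← map_smul, hpψ]

end Transfer

section PartialIsoSystem

variable {G H : Type u} [AddCommGroup G] [Module R G] [AddCommGroup H] [Module R H]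
  {I : Set (G →ₗ.[R] H)} {f : G →ₗ.[R] H}

namespace IsPartialIsoSystem

theorem mem_ppow_iff (hI : IsPartialIsoSystem I) (p : R) (α : Ordinal.{u}) :
    ∀ f ∈ I, ∀ x : f.domain, f x ∈ ppow p α ↔ (x : G) ∈ ppow p α := by
  induction α using Ordinal.limitRecOn with
  | zero => simp [ppow_zero]
  | add_one α ih =>
    intro f hf x
    rw [mem_ppow_add_one_iff, mem_ppow_add_one_iff]
    constructor
    · rintro ⟨z, hz, hzx⟩
      obtain ⟨g, hg, hfg, y, rfl⟩ := hI.2.2.2 f hf z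
      have hgyx : g (p • y) = g ⟨x, hfg.1 x.2⟩ := by
        rw [g.map_smul, hzx]
        exact hfg.2 rfl
      have hyx : p • y = ⟨x, hfg.1 x.2⟩ := hI.2.1 g hg hgyx
      exact ⟨y, (ih g hg y).1 hz, congrArg Subtype.val hyx⟩
    · rintro ⟨y, hy, hyx⟩
      obtain ⟨g, hg, hfg, hyg⟩ := hI.2.2.1 f hf y
      refine ⟨g ⟨y, hyg⟩, (ih g hg _).2 hy, ?_⟩
      rw [← g.map_smul]
      exact (hfg.2 hyx.symm).symm
  | limit α hα ih =>
    intro f hf x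
    simp only [ppow_of_isSuccLimit p hα, Submodule.mem_iInf]
    exact forall_congr' fun β => ih β.1 β.2 f hf x

theorem pheight_apply (hI : IsPartialIsoSystem I) (p : R) (hf : f ∈ I) (x : f.domain) :
    pheight p (f x) = pheight p (x : G) :=
  pheight_eq_of_mem_ppow_iff p fun α => hI.mem_ppow_iff p α f hf x

theorem exists_le_subset_domain (hI : IsPartialIsoSystem I) (hf : f ∈ I) {s : Set G}
    (hs : s.Finite) : ∃ g ∈ I, f ≤ g ∧ s ⊆ g.domain := by
  induction s, hs using Set.Finite.induction_on with
  | empty => exact ⟨f, hf, le_rfl, Set.empty_subset _⟩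
  | @insert a s _ _ ih =>
    obtain ⟨g, hg, hfg, hsg⟩ := ih
    obtain ⟨g', hg', hgg', hag'⟩ := hI.2.2.1 g hg a
    exact ⟨g', hg', hfg.trans hgg', Set.insert_subset hag' (hsg.trans hgg'.1)⟩

theorem isDecompositionSet_image (hI : IsPartialIsoSystem I) (hf : f ∈ I) {X : Set G}
    (hX : X ⊆ f.domain) (hD : IsDecompositionSet R X) :
    IsDecompositionSet R (f.toFun '' (Subtype.val ⁻¹' X)) := fun p hp =>
  IsDecompWrt.image_of_pheight_eq f.domain.injective_subtype (hI.2.1 f hf) (hI.pheight_apply p hf)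
    (by rw [LinearPMap.subtype_image_preimage hX]; exact hD p hp)

end IsPartialIsoSystem

variable (I) in
/-- The system `C'` of the images `f(X)`. -/
def pdbImage (C : Set (Set G)) : Set (Set H) :=
  {Y | ∃ X ∈ C, ∃ f ∈ I, X ⊆ f.domain ∧ Y = f.toFun '' (Subtype.val ⁻¹' X)}

theorem IsPartialIsoSystem.isPDB_pdbImage (hI : IsPartialIsoSystem I) {C : Set (Set G)}
    (hC : IsPDB R C) :
    IsPDB R (pdbImage I C) := by
  obtain ⟨⟨X, hX⟩, hfin, hdec, hext⟩ := hC
  have mem : ∀ X ∈ C, ∀ f ∈ I, X ⊆ f.domain →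
      f.toFun '' (Subtype.val ⁻¹' X) ∈ pdbImage I C :=
    fun X hX f hf hXf => ⟨X, hX, f, hf, hXf, rfl⟩
  refine ⟨?_, ?_, ?_, ?_⟩
  · obtain ⟨f, hf⟩ := hI.1
    obtain ⟨g, hg, -, hXg⟩ := hI.exists_le_subset_domain hf (hfin X hX)
    exact ⟨_, mem X hX g hg hXg⟩
  · rintro _ ⟨X, hX, f, -, -, rfl⟩
    exact ((hfin X hX).preimage Subtype.val_injective.injOn).image _
  · rintro _ ⟨X, hX, f, hf, hXf, rfl⟩
    exact hI.isDecompositionSet_image hf hXf (hdec X hX)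
  · rintro _ ⟨X, hX, f, hf, -, rfl⟩ b
    obtain ⟨g, hg, hfg, x, rfl⟩ := hI.2.2.2 f hf b
    obtain ⟨Z, hZ, hXZ, a, ha, hax⟩ := hext X hX x
    obtain ⟨k, hk, hgk, hZk⟩ := hI.exists_le_subset_domain hg (hfin Z hZ)
    have hxk : (x : G) ∈ k.domain := hgk.1 x.2
    refine ⟨_, mem Z hZ k hk hZk, LinearPMap.image_preimage_subset_of_le (hfg.trans hgk) hXZ,
      a, ha, ?_⟩
    have hgxk : g (a • x) = k (a • ⟨x, hxk⟩) := hgk.2 (by simp)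
    rw [← g.map_smul, hgxk]
    refine map_mem_span_image_of_mem_span_image k.toFun k.domain.injective_subtype ?_
    rw [LinearPMap.subtype_image_preimage hZk]
    simpa using hax

end PartialIsoSystem

end UlmW

theorem statement_1_general {R : Type*} [CommRing R]
    {G H : Type u} [AddCommGroup G] [Module R G] [AddCommGroup H] [Module R H]
    (I : Set (G →ₗ.[R] H)) (hI : IsPartialIsoSystem I)
    (C : Set (Set G)) (hC : IsPDB R C) :
    IsPDB R {Y : Set H | ∃ X ∈ C, ∃ f ∈ I, X ⊆ (f.domain : Set G) ∧
        Y = {y : H | ∃ x : f.domain, (x : G) ∈ X ∧ f x = y}} ∧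
    ∃ C' : Set (Set H), IsPDB R C' := by
  have hC' : IsPDB R (pdbImage I C) := hI.isPDB_pdbImage hC
  exact ⟨hC', _, hC'⟩

theorem statement_1 {R : Type*} [CommRing R] [IsDomain R] [IsPrincipalIdealRing R]
    {G H : Type u} [AddCommGroup G] [Module R G] [AddCommGroup H] [Module R H]
    (I : Set (G →ₗ.[R] H)) (hI : IsPartialIsoSystem I)
    (C : Set (Set G)) (hC : IsPDB R C) :
    IsPDB R {Y : Set H | ∃ X ∈ C, ∃ f ∈ I, X ⊆ (f.domain : Set G) ∧
        Y = {y : H | ∃ x : f.domain, (x : G) ∈ X ∧ f x = y}} ∧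
    ∃ C' : Set (Set H), IsPDB R C' :=
  statement_1_general I hI C hC
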